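/- With b = σ·z, all solutions of u'' + b(x)u' = 0 on ℝ are bounded, and the (two-dimensional) solution space is generated by u₁ ≡ 1 and the function u₂(x) = ∫₀^x exp(−∫₀^y b(t) dt) dy, which is bounded, strictly increasing, odd, and not almost periodic. -/

import Mathlib

open Filter Topology

noncomputable section

/-- The defining properties of the function `σ` of Section 3 of the paper:
`σ = −1` on `(−1,0]`, `σ = 1` on `(0,1]`, and for every `n ≥ 0`,
`σ(x) = σ(x + 2·3^n) − 1/(n+1)²` on `(−3^{n+1}, −3^n]` and
`σ(x) = σ(x − 2·3^n) + 1/(n+1)²` on `(3^n, 3^{n+1}]`.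
These conditions determine `σ` uniquely on all of `ℝ`. -/
def SigmaSpec (σ : ℝ → ℝ) : Prop :=
  (∀ x : ℝ, -1 < x → x ≤ 0 → σ x = -1) ∧
  (∀ x : ℝ, 0 < x → x ≤ 1 → σ x = 1) ∧
  (∀ (n : ℕ) (x : ℝ), -(3 : ℝ) ^ (n + 1) < x → x ≤ -(3 : ℝ) ^ n →
    σ x = σ (x + 2 * 3 ^ n) - 1 / ((n : ℝ) + 1) ^ 2) ∧
  (∀ (n : ℕ) (x : ℝ), (3 : ℝ) ^ n < x → x ≤ (3 : ℝ) ^ (n + 1) →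
    σ x = σ (x - 2 * 3 ^ n) + 1 / ((n : ℝ) + 1) ^ 2)
/-- The continuous `1`-periodic function with `z(x) = 2|x|` on `[−1/2, 1/2]`
(twice the distance to the nearest integer). -/
def zfun (x : ℝ) : ℝ := 2 * |x - (round x : ℤ)|

/-- A continuous function `φ : ℝ → ℝ` is almost periodic (Bochner's
characterization). -/
def AlmostPeriodic1 (φ : ℝ → ℝ) : Prop :=
  Continuous φ ∧ ∀ s : ℕ → ℝ, ∃ k : ℕ → ℕ, StrictMono k ∧
    ∃ ψ : ℝ → ℝ, TendstoUniformly (fun n x => φ (x + s (k n))) ψ atTop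

namespace Cx
open Real intervalIntegral MeasureTheory

lemma zfun_nonneg (x : ℝ) : 0 ≤ zfun x := by unfold zfun; positivity

lemma zfun_le_one (x : ℝ) : zfun x ≤ 1 := by
  have := abs_sub_round x; unfold zfun; linarith

lemma zfun_int (k : ℤ) : zfun (k : ℝ) = 0 := by
  simp [zfun]

lemma zfun_add_int (x : ℝ) (k : ℤ) : zfun (x + k) = zfun x := by
  unfold zfun
  rw [round_add_intCast]
  push_cast
  ring_nf

lemma abs_sub_round_le (x : ℝ) (m : ℤ) : |x - round x| ≤ |x - m| := by
  rcases eq_or_ne m (round x) with h | h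
  · rw [h]
  · have h1 : (1:ℝ) ≤ |(m:ℝ) - round x| := by
      rw [show ((m:ℝ) - round x) = ((m - round x : ℤ) : ℝ) by push_cast; ring]
      rw [← Int.cast_abs]
      exact_mod_cast Int.one_le_abs (sub_ne_zero.mpr h)
    have h2 := abs_sub_round x
    have h3 : |(m:ℝ) - round x| ≤ |x - m| + |x - round x| := by
      have := abs_sub (x - (m:ℝ)) (x - round x)
      calc |(m:ℝ) - round x| = |(x - round x) - (x - m)| := by ring_nf
        _ ≤ |x - round x| + |x - m| := abs_sub _ _
        _ = |x - m| + |x - round x| := by ring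
    linarith

lemma zfun_lipschitz (x y : ℝ) : zfun x - zfun y ≤ 2 * |x - y| := by
  have h1 := abs_sub_round_le x (round y)
  have h2 : |x - (round y : ℝ)| ≤ |x - y| + |y - round y| := by
    calc |x - (round y:ℝ)| = |(x - y) + (y - round y)| := by ring_nf
      _ ≤ |x - y| + |y - round y| := abs_add_le _ _
  unfold zfun; linarith

lemma zfun_continuous : Continuous zfun := by
  rw [Metric.continuous_iff]
  intro x ε hε
  refine ⟨ε / 2, by positivity, fun y hy => ?_⟩
  rw [Real.dist_eq] at *
  have h1 := zfun_lipschitz y x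
  have h2 := zfun_lipschitz x y
  have : |x - y| = |y - x| := abs_sub_comm _ _
  rw [abs_lt]; constructor <;> nlinarith [abs_nonneg (y - x)]

lemma zfun_even (x : ℝ) : zfun (-x) = zfun x := by
  have h1 : zfun (-x) ≤ zfun x := by
    have := abs_sub_round_le (-x) (-round x)
    unfold zfun
    have : |(-x) - ((-round x : ℤ) : ℝ)| = |x - round x| := by
      push_cast; rw [← abs_neg]; ring_nf
    have h2 := abs_sub_round_le (-x) (-round x)
    rw [this] at h2
    · unfold zfun at *; push_cast at *; linarith
  have h2 : zfun x ≤ zfun (-x) := by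
    have h2 := abs_sub_round_le x (-round (-x))
    have : |x - ((-round (-x) : ℤ) : ℝ)| = |(-x) - round (-x)| := by
      push_cast; rw [← abs_neg]; ring_nf
    rw [this] at h2
    unfold zfun at *; linarith
  linarith

lemma zfun_ge_half {k : ℤ} {x : ℝ} (h1 : (k:ℝ) + 1/4 ≤ x) (h2 : x ≤ (k:ℝ) + 3/4) :
    1/2 ≤ zfun x := by
  have hr : round x = k ∨ round x = k + 1 := by
    rw [round_eq]
    rcases le_or_gt ((k:ℝ) + 1) (x + 1/2) with h | h
    · right
      have : ⌊x + 1/2⌋ = k + 1 := by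
        apply Int.floor_eq_iff.mpr
        constructor <;> push_cast <;> linarith
      rw [show (1:ℝ)/2 = 2⁻¹ by norm_num] at this
      simp [this]
    · left
      have : ⌊x + 1/2⌋ = k := by
        apply Int.floor_eq_iff.mpr
        constructor <;> push_cast <;> linarith
      rw [show (1:ℝ)/2 = 2⁻¹ by norm_num] at this
      simp [this]
  unfold zfun
  rcases hr with h | h <;> rw [h] <;> push_cast
  · have : 1/4 ≤ x - (k:ℝ) := by linarith
    have h4 : (1:ℝ)/4 ≤ |x - (k:ℝ)| := le_trans this (le_abs_self _)
    linarith
  · have : 1/4 ≤ -(x - ((k:ℝ)+1)) := by linarith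
    have h4 : (1:ℝ)/4 ≤ |x - ((k:ℝ)+1)| := le_trans this (neg_le_abs _)
    linarith


open Real

lemma cover (x : ℝ) : ∃ n : ℕ, -(3:ℝ)^n < x ∧ x ≤ (3:ℝ)^n := by
  obtain ⟨n, hn⟩ := pow_unbounded_of_one_lt |x| (by norm_num : (1:ℝ) < 3)
  exact ⟨n, by cases abs_lt.mp hn; constructor <;> linarith⟩

lemma pow3_int (m : ℕ) : ∃ k : ℤ, ((3:ℝ)^m) = (k:ℝ) ∧ (k:ℝ) = (3:ℝ)^m :=
  ⟨3^m, by push_cast; exact ⟨rfl, rfl⟩⟩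

lemma sigma_abs_le {σ : ℝ → ℝ} (hσ : SigmaSpec σ) :
    ∀ n : ℕ, ∀ x : ℝ, -(3:ℝ)^n < x → x ≤ (3:ℝ)^n → |σ x| ≤ n + 1 := by
  intro n
  induction n with
  | zero =>
    intro x h1 h2
    simp only [pow_zero] at h1 h2
    rcases le_or_gt x 0 with h | h
    · rw [hσ.1 x h1 h]; norm_num
    · rw [hσ.2.1 x h h2]; norm_num
  | succ n ih =>
    intro x h1 h2
    have hp : (0:ℝ) < 3^n := by positivity
    have hq : (3:ℝ)^(n+1) = 3 * 3^n := by ring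
    have hn0 : (0:ℝ) ≤ (n:ℝ) := Nat.cast_nonneg n
    have hc : 1 / ((n:ℝ)+1)^2 ≤ 1 := by
      rw [div_le_one (by positivity)]; nlinarith
    rcases le_or_gt x (-(3:ℝ)^n) with hx | hx
    · rw [hσ.2.2.1 n x h1 hx]
      have := ih (x + 2*3^n) (by nlinarith) (by nlinarith)
      have h5 : (0:ℝ) ≤ 1 / ((n:ℝ)+1)^2 := by positivity
      rw [abs_le] at *
      push_cast at *
      constructor <;> nlinarith
    · rcases le_or_gt x ((3:ℝ)^n) with hx2 | hx2
      · have := ih x hx hx2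
        rw [abs_le] at *; push_cast at *; constructor <;> linarith
      · rw [hσ.2.2.2 n x hx2 h2]
        have := ih (x - 2*3^n) (by nlinarith) (by nlinarith)
        have h5 : (0:ℝ) ≤ 1 / ((n:ℝ)+1)^2 := by positivity
        rw [abs_le] at *
        push_cast at *
        constructor <;> nlinarith

lemma sigma_loc_const {σ : ℝ → ℝ} (hσ : SigmaSpec σ) :
    ∀ n : ℕ, ∀ x : ℝ, -(3:ℝ)^n < x → x ≤ (3:ℝ)^n →
    (∀ k : ℤ, x ≠ (k:ℝ)) → ∃ ε > 0, ∀ y : ℝ, |y - x| < ε → σ y = σ x := by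
  intro n
  induction n with
  | zero =>
    intro x h1 h2 hk
    simp only [pow_zero] at h1 h2
    rcases le_or_gt x 0 with h | h
    · have hx0 : x < 0 := lt_of_le_of_ne h (by have := hk 0; push_cast at this; exact this)
      refine ⟨min (x+1) (-x), lt_min_iff.mpr ⟨by linarith, by linarith⟩, fun y hy => ?_⟩
      have e1 := lt_of_lt_of_le hy (min_le_left _ _)
      have e2 := lt_of_lt_of_le hy (min_le_right _ _)
      obtain ⟨a1, a2⟩ := abs_lt.mp e1
      obtain ⟨a3, a4⟩ := abs_lt.mp e2
      rw [hσ.1 y (by linarith) (by linarith), hσ.1 x h1 h]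
    · have hx1 : x < 1 := lt_of_le_of_ne h2 (by have := hk 1; push_cast at this; exact this)
      refine ⟨min x (1-x), lt_min_iff.mpr ⟨by linarith, by linarith⟩, fun y hy => ?_⟩
      have e1 := lt_of_lt_of_le hy (min_le_left _ _)
      have e2 := lt_of_lt_of_le hy (min_le_right _ _)
      obtain ⟨a1, a2⟩ := abs_lt.mp e1
      obtain ⟨a3, a4⟩ := abs_lt.mp e2
      rw [hσ.2.1 y (by linarith) (by linarith), hσ.2.1 x h h2]
  | succ n ih =>
    intro x h1 h2 hk
    have hp : (0:ℝ) < 3^n := by positivity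
    have hq : (3:ℝ)^(n+1) = 3 * 3^n := by ring
    obtain ⟨k3, hk3, hk3'⟩ := pow3_int n
    obtain ⟨k4, hk4, hk4'⟩ := pow3_int (n+1)
    rcases le_or_gt x (-(3:ℝ)^n) with hx | hx
    · have hxlt : x < -(3:ℝ)^n := lt_of_le_of_ne hx (by
        intro h; exact hk (-k3) (by rw [h]; push_cast; rw [hk3'])
      )
      have hne : ∀ k : ℤ, x + 2*3^n ≠ (k:ℝ) := by
        intro k hh
        refine hk (k - 2*k3) ?_
        push_cast; rw [hk3'] at *; linarith
      obtain ⟨ε, hε, hloc⟩ := ih (x + 2*3^n) (by linarith) (by linarith) hne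
      refine ⟨min ε (min (x + 3^(n+1)) (-(3:ℝ)^n - x)),
        lt_min_iff.mpr ⟨hε, lt_min_iff.mpr ⟨by linarith, by linarith⟩⟩, fun y hy => ?_⟩
      have e1 := lt_of_lt_of_le hy (min_le_left _ _)
      have e2 := lt_of_lt_of_le (lt_of_lt_of_le hy (min_le_right _ _)) (min_le_left _ _)
      have e3 := lt_of_lt_of_le (lt_of_lt_of_le hy (min_le_right _ _)) (min_le_right _ _)
      obtain ⟨a2, a3⟩ := abs_lt.mp e2
      obtain ⟨a4, a5⟩ := abs_lt.mp e3
      have g1 : σ y = σ (y + 2*3^n) - 1/((n:ℝ)+1)^2 :=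
        hσ.2.2.1 n y (by linarith) (by linarith)
      have g2 : σ x = σ (x + 2*3^n) - 1/((n:ℝ)+1)^2 := hσ.2.2.1 n x h1 hx
      rw [g1, g2, hloc (y + 2*3^n) (by
        rw [show y + 2*3^n - (x + 2*3^n) = y - x by ring]; exact e1)]
    · rcases le_or_gt x ((3:ℝ)^n) with hx2 | hx2
      · exact ih x hx hx2 hk
      · have hxlt : x < (3:ℝ)^(n+1) := lt_of_le_of_ne h2 (by
          intro h; exact hk k4 (by rw [h, hk4]))
        have hne : ∀ k : ℤ, x - 2*3^n ≠ (k:ℝ) := by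
          intro k hh
          refine hk (k + 2*k3) ?_
          push_cast; rw [hk3'] at *; linarith
        obtain ⟨ε, hε, hloc⟩ := ih (x - 2*3^n) (by linarith) (by linarith) hne
        refine ⟨min ε (min (x - 3^n) ((3:ℝ)^(n+1) - x)),
          lt_min_iff.mpr ⟨hε, lt_min_iff.mpr ⟨by linarith, by linarith⟩⟩, fun y hy => ?_⟩
        have e1 := lt_of_lt_of_le hy (min_le_left _ _)
        have e2 := lt_of_lt_of_le (lt_of_lt_of_le hy (min_le_right _ _)) (min_le_left _ _)
        have e3 := lt_of_lt_of_le (lt_of_lt_of_le hy (min_le_right _ _)) (min_le_right _ _)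
        obtain ⟨a2, a3⟩ := abs_lt.mp e2
        obtain ⟨a4, a5⟩ := abs_lt.mp e3
        have g1 : σ y = σ (y - 2*3^n) + 1/((n:ℝ)+1)^2 :=
          hσ.2.2.2 n y (by linarith) (by linarith)
        have g2 : σ x = σ (x - 2*3^n) + 1/((n:ℝ)+1)^2 := hσ.2.2.2 n x hx2 h2
        rw [g1, g2, hloc (y - 2*3^n) (by
          rw [show y - 2*3^n - (x - 2*3^n) = y - x by ring]; exact e1)]

lemma sigma_odd {σ : ℝ → ℝ} (hσ : SigmaSpec σ) :
    ∀ n : ℕ, ∀ x : ℝ, -(3:ℝ)^n < x → x ≤ (3:ℝ)^n →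
    (∀ k : ℤ, x ≠ (k:ℝ)) → σ (-x) = -σ x := by
  intro n
  induction n with
  | zero =>
    intro x h1 h2 hk
    simp only [pow_zero] at h1 h2
    rcases le_or_gt x 0 with h | h
    · have hx0 : x < 0 := lt_of_le_of_ne h (by have := hk 0; push_cast at this; exact this)
      rw [hσ.1 x h1 h, hσ.2.1 (-x) (by linarith) (by linarith)]; ring
    · have hx1 : x < 1 := lt_of_le_of_ne h2 (by have := hk 1; push_cast at this; exact this)
      rw [hσ.2.1 x h h2, hσ.1 (-x) (by linarith) (by linarith)]
  | succ n ih =>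
    intro x h1 h2 hk
    have hp : (0:ℝ) < 3^n := by positivity
    have hq : (3:ℝ)^(n+1) = 3 * 3^n := by ring
    obtain ⟨k3, hk3, hk3'⟩ := pow3_int n
    obtain ⟨k4, hk4, hk4'⟩ := pow3_int (n+1)
    rcases le_or_gt x (-(3:ℝ)^n) with hx | hx
    · have hxlt : x < -(3:ℝ)^n := lt_of_le_of_ne hx (by
        intro h; exact hk (-k3) (by rw [h]; push_cast; rw [hk3']))
      have hne : ∀ k : ℤ, x + 2*3^n ≠ (k:ℝ) := by
        intro k hh
        refine hk (k - 2*k3) ?_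
        push_cast; rw [hk3'] at *; linarith
      have e2 : σ x = σ (x + 2*3^n) - 1/((n:ℝ)+1)^2 := hσ.2.2.1 n x h1 hx
      have e1 : σ (-x) = σ (-x - 2*3^n) + 1/((n:ℝ)+1)^2 :=
        hσ.2.2.2 n (-x) (by linarith) (by linarith)
      have e3 : σ (-(x + 2*3^n)) = - σ (x + 2*3^n) :=
        ih (x + 2*3^n) (by linarith) (by linarith) hne
      rw [e1, e2, show -x - 2*3^n = -(x + 2*(3:ℝ)^n) by ring, e3]; ring
    · rcases le_or_gt x ((3:ℝ)^n) with hx2 | hx2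
      · exact ih x hx hx2 hk
      · have hxlt : x < (3:ℝ)^(n+1) := lt_of_le_of_ne h2 (by
          intro h; exact hk k4 (by rw [h, hk4]))
        have hne : ∀ k : ℤ, x - 2*3^n ≠ (k:ℝ) := by
          intro k hh
          refine hk (k + 2*k3) ?_
          push_cast; rw [hk3'] at *; linarith
        have e2 : σ x = σ (x - 2*3^n) + 1/((n:ℝ)+1)^2 := hσ.2.2.2 n x hx2 h2
        have e1 : σ (-x) = σ (-x + 2*3^n) - 1/((n:ℝ)+1)^2 :=
          hσ.2.2.1 n (-x) (by linarith) (by linarith)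
        have e3 : σ (-(x - 2*3^n)) = - σ (x - 2*3^n) :=
          ih (x - 2*3^n) (by linarith) (by linarith) hne
        rw [e1, e2, show -x + 2*3^n = -(x - 2*(3:ℝ)^n) by ring, e3]; ring


def bb (σ : ℝ → ℝ) (x : ℝ) : ℝ := σ x * zfun x

variable {σ : ℝ → ℝ}

lemma bb_int (k : ℤ) : bb σ (k:ℝ) = 0 := by
  unfold bb; rw [zfun_int]; ring

lemma bb_cont (hσ : SigmaSpec σ) : Continuous (bb σ) := by
  rw [continuous_iff_continuousAt]
  intro x
  by_cases hx : ∃ k : ℤ, x = (k:ℝ)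
  · obtain ⟨k, rfl⟩ := hx
    have h0 : bb σ (k:ℝ) = 0 := bb_int k
    obtain ⟨m, hm1, hm2⟩ := cover (|(k:ℝ)| + 1)
    have hb : ∀ y : ℝ, |y - k| < 1 → ‖bb σ y‖ ≤ ((m:ℝ)+1) * zfun y := by
      intro y hy
      obtain ⟨c1, c2⟩ := abs_lt.mp hy
      have hk1 : -(|(k:ℝ)|+1) ≤ (k:ℝ) - 1 := by
        have := neg_abs_le (k:ℝ); linarith
      have hk2 : (k:ℝ) + 1 ≤ |(k:ℝ)| + 1 := by
        have := le_abs_self (k:ℝ); linarith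
      have hs := sigma_abs_le hσ m y (by linarith) (by linarith)
      rw [Real.norm_eq_abs]
      unfold bb
      rw [abs_mul, abs_of_nonneg (zfun_nonneg y)]
      exact mul_le_mul_of_nonneg_right hs (zfun_nonneg y)
    unfold ContinuousAt
    rw [h0]
    apply squeeze_zero_norm'
    · rw [Metric.eventually_nhds_iff]
      exact ⟨1, one_pos, fun {y} hy => hb y (by rwa [Real.dist_eq] at hy)⟩
    · have hc : Continuous (fun y : ℝ => ((m:ℝ)+1) * zfun y) := continuous_const.mul zfun_continuous
      have h6 := hc.tendsto (k:ℝ)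
      simp only [zfun_int k, mul_zero] at h6
      exact h6
  · push_neg at hx
    obtain ⟨n, hn1, hn2⟩ := cover x
    obtain ⟨ε, hε, hloc⟩ := sigma_loc_const hσ n x hn1 hn2 hx
    have heq : (fun y => σ x * zfun y) =ᶠ[nhds x] bb σ := by
      rw [Filter.eventuallyEq_iff_exists_mem]
      refine ⟨Metric.ball x ε, Metric.ball_mem_nhds x hε, fun y hy => ?_⟩
      rw [Metric.mem_ball, Real.dist_eq] at hy
      unfold bb; rw [hloc y hy]
    exact ContinuousAt.congr ((continuous_const.mul zfun_continuous).continuousAt) heq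

lemma bb_odd (hσ : SigmaSpec σ) (x : ℝ) : bb σ (-x) = - bb σ x := by
  by_cases hx : ∃ k : ℤ, x = (k:ℝ)
  · obtain ⟨k, rfl⟩ := hx
    rw [bb_int k, show -(k:ℝ) = ((-k : ℤ):ℝ) by push_cast; ring, bb_int (-k)]
    ring
  · push_neg at hx
    obtain ⟨n, hn1, hn2⟩ := cover x
    unfold bb
    rw [sigma_odd hσ n x hn1 hn2 hx, zfun_even]
    ring

lemma bb_shell (hσ : SigmaSpec σ) (n : ℕ) {x : ℝ} (h1 : (3:ℝ)^n < x) (h2 : x ≤ (3:ℝ)^(n+1)) :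
    bb σ x = bb σ (x - 2*3^n) + zfun x / ((n:ℝ)+1)^2 := by
  have hz : zfun (x - 2*3^n) = zfun x := by
    rw [show x - 2*(3:ℝ)^n = x + ((-(2*3^n) : ℤ) : ℝ) by push_cast; ring, zfun_add_int]
  unfold bb
  rw [hσ.2.2.2 n x h1 h2, hz]
  ring

lemma bb_nonneg01 (hσ : SigmaSpec σ) {t : ℝ} (h1 : 0 ≤ t) (h2 : t ≤ 1) : 0 ≤ bb σ t := by
  rcases eq_or_lt_of_le h1 with h | h
  · have h7 : bb σ ((0:ℤ):ℝ) = 0 := bb_int 0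
    push_cast at h7
    rw [← h, h7]
  · unfold bb
    rw [hσ.2.1 t h h2]
    have := zfun_nonneg t; linarith

def BB (σ : ℝ → ℝ) (x : ℝ) : ℝ := ∫ t in (0:ℝ)..x, bb σ t

lemma bb_ii (hσ : SigmaSpec σ) (a b : ℝ) : IntervalIntegrable (bb σ) MeasureTheory.volume a b :=
  (bb_cont hσ).intervalIntegrable a b

lemma BB_even (hσ : SigmaSpec σ) (x : ℝ) : BB σ (-x) = BB σ x := by
  have h1 : ∫ t in (0:ℝ)..x, bb σ (-t) = ∫ t in (-x)..(-(0:ℝ)), bb σ t :=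
    intervalIntegral.integral_comp_neg (fun t => bb σ t)
  have h2 : ∫ t in (0:ℝ)..x, bb σ (-t) = ∫ t in (0:ℝ)..x, -(bb σ t) := by
    apply intervalIntegral.integral_congr
    intro t _
    exact bb_odd hσ t
  rw [intervalIntegral.integral_neg] at h2
  rw [h2] at h1
  have h3 : ∫ t in (-x)..(-(0:ℝ)), bb σ t = -BB σ (-x) := by
    rw [neg_zero, intervalIntegral.integral_symm]
    rfl
  rw [h3] at h1
  have h4 : BB σ (-x) = ∫ t in (0:ℝ)..(-x), bb σ t := rfl
  have h5 : BB σ x = ∫ t in (0:ℝ)..x, bb σ t := rfl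
  linarith

lemma zfun_ii (a b : ℝ) : IntervalIntegrable zfun MeasureTheory.volume a b :=
  zfun_continuous.intervalIntegrable a b

lemma BB_shell (hσ : SigmaSpec σ) (n : ℕ) {x : ℝ} (h1 : (3:ℝ)^n < x) (h2 : x ≤ (3:ℝ)^(n+1)) :
    BB σ x = BB σ (x - 2*3^n) + (∫ t in ((3:ℝ)^n)..x, zfun t) / ((n:ℝ)+1)^2 := by
  have hp : (0:ℝ) < 3^n := by positivity
  have hi1 : BB σ x - BB σ ((3:ℝ)^n) = ∫ t in ((3:ℝ)^n)..x, bb σ t := by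
    unfold BB
    rw [intervalIntegral.integral_interval_sub_left (bb_ii hσ 0 x) (bb_ii hσ 0 (3^n))]
  have heq : Set.EqOn (bb σ) (fun t => bb σ (t - 2*3^n) + zfun t / ((n:ℝ)+1)^2)
      (Set.uIcc ((3:ℝ)^n) x) := by
    intro t ht
    rw [Set.uIcc_of_le (le_of_lt h1)] at ht
    rcases eq_or_lt_of_le ht.1 with h | h
    · obtain ⟨k3, hk3, hk3'⟩ := pow3_int n
      have e1 : bb σ ((3:ℝ)^n) = 0 := by rw [hk3]; exact bb_int k3
      have e2 : bb σ ((3:ℝ)^n - 2*3^n) = 0 := by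
        rw [show (3:ℝ)^n - 2*3^n = ((-k3 : ℤ):ℝ) by push_cast; rw [hk3']; ring]
        exact bb_int (-k3)
      have e3 : zfun ((3:ℝ)^n) = 0 := by rw [hk3]; exact zfun_int k3
      rw [← h]; simp [e1, e2, e3]
    · exact bb_shell hσ n h (le_trans ht.2 h2)
  have hi2 : ∫ t in ((3:ℝ)^n)..x, bb σ t
      = (∫ t in ((3:ℝ)^n)..x, bb σ (t - 2*3^n)) + ∫ t in ((3:ℝ)^n)..x, zfun t / ((n:ℝ)+1)^2 := by
    rw [intervalIntegral.integral_congr heq]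
    apply intervalIntegral.integral_add
    · have : Continuous (fun t => bb σ (t - 2*3^n)) :=
        (bb_cont hσ).comp (continuous_id.sub continuous_const)
      exact this.intervalIntegrable _ _
    · exact (zfun_continuous.div_const _).intervalIntegrable _ _
  have hi3 : (∫ t in ((3:ℝ)^n)..x, bb σ (t - 2*3^n))
      = ∫ t in ((3:ℝ)^n - 2*3^n)..(x - 2*3^n), bb σ t :=
    intervalIntegral.integral_comp_sub_right (fun t => bb σ t) (2*3^n)
  have hi4 : ∫ t in ((3:ℝ)^n - 2*3^n)..(x - 2*3^n), bb σ t
      = BB σ (x - 2*3^n) - BB σ ((3:ℝ)^n) := by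
    rw [show (3:ℝ)^n - 2*3^n = -(3:ℝ)^n by ring]
    have h9 := intervalIntegral.integral_interval_sub_left (bb_ii hσ 0 (x - 2*3^n)) (bb_ii hσ 0 (-(3:ℝ)^n))
    have d1 : BB σ (x - 2*3^n) = ∫ t in (0:ℝ)..(x - 2*3^n), bb σ t := rfl
    have d2 : BB σ (-(3:ℝ)^n) = ∫ t in (0:ℝ)..(-(3:ℝ)^n), bb σ t := rfl
    rw [← h9, ← d1, ← d2, BB_even hσ]
  have hi5 : ∫ t in ((3:ℝ)^n)..x, zfun t / ((n:ℝ)+1)^2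
      = (∫ t in ((3:ℝ)^n)..x, zfun t) / ((n:ℝ)+1)^2 :=
    intervalIntegral.integral_div _ _
  rw [hi2, hi3, hi4, hi5] at hi1
  linarith

lemma zint_unit (a : ℤ) : 1/4 ≤ ∫ t in (a:ℝ)..((a:ℝ)+1), zfun t := by
  have k1 : ∫ t in (a:ℝ)..((a:ℝ)+1), zfun t
      = (∫ t in (a:ℝ)..((a:ℝ)+1/4), zfun t) + ∫ t in ((a:ℝ)+1/4)..((a:ℝ)+1), zfun t := by
    rw [intervalIntegral.integral_add_adjacent_intervals (zfun_ii _ _) (zfun_ii _ _)]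
  have k2 : ∫ t in ((a:ℝ)+1/4)..((a:ℝ)+1), zfun t
      = (∫ t in ((a:ℝ)+1/4)..((a:ℝ)+3/4), zfun t) + ∫ t in ((a:ℝ)+3/4)..((a:ℝ)+1), zfun t := by
    rw [intervalIntegral.integral_add_adjacent_intervals (zfun_ii _ _) (zfun_ii _ _)]
  have p1 : (0:ℝ) ≤ ∫ t in (a:ℝ)..((a:ℝ)+1/4), zfun t :=
    intervalIntegral.integral_nonneg (by linarith) (fun u _ => zfun_nonneg u)
  have p3 : (0:ℝ) ≤ ∫ t in ((a:ℝ)+3/4)..((a:ℝ)+1), zfun t :=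
    intervalIntegral.integral_nonneg (by linarith) (fun u _ => zfun_nonneg u)
  have p2 : (1:ℝ)/4 ≤ ∫ t in ((a:ℝ)+1/4)..((a:ℝ)+3/4), zfun t := by
    have hm : ∫ t in ((a:ℝ)+1/4)..((a:ℝ)+3/4), (1:ℝ)/2
        ≤ ∫ t in ((a:ℝ)+1/4)..((a:ℝ)+3/4), zfun t := by
      apply intervalIntegral.integral_mono_on (by linarith)
        (intervalIntegrable_const) (zfun_ii _ _)
      intro u hu
      exact zfun_ge_half hu.1 hu.2
    rw [intervalIntegral.integral_const] at hm
    have : ((a:ℝ)+3/4 - ((a:ℝ)+1/4)) • ((1:ℝ)/2) = 1/4 := by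
      rw [smul_eq_mul]; ring
    rw [this] at hm
    exact hm
  linarith

lemma zint_lb (a : ℤ) : ∀ (m : ℕ) (x : ℝ), (a:ℝ) + m ≤ x →
    (m:ℝ)/4 ≤ ∫ t in (a:ℝ)..x, zfun t := by
  intro m
  induction m generalizing a with
  | zero =>
    intro x hx
    push_cast at hx ⊢
    simp only [zero_div]
    exact intervalIntegral.integral_nonneg (by linarith) (fun u _ => zfun_nonneg u)
  | succ m ih =>
    intro x hx
    push_cast at hx
    have hx1 : ((a+1 : ℤ):ℝ) + m ≤ x := by push_cast; linarith
    have k1 : ∫ t in (a:ℝ)..x, zfun t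
        = (∫ t in (a:ℝ)..((a:ℝ)+1), zfun t) + ∫ t in ((a:ℝ)+1)..x, zfun t := by
      rw [intervalIntegral.integral_add_adjacent_intervals (zfun_ii _ _) (zfun_ii _ _)]
    have k2 := ih (a+1) x hx1
    push_cast at k2
    have k3 := zint_unit a
    push_cast
    linarith

lemma BB_nonneg (hσ : SigmaSpec σ) : ∀ x : ℝ, 0 ≤ BB σ x := by
  have main : ∀ n : ℕ, ∀ x : ℝ, 0 ≤ x → x ≤ (3:ℝ)^n → 0 ≤ BB σ x := by
    intro n
    induction n with
    | zero =>
      intro x h0 h1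
      simp only [pow_zero] at h1
      exact intervalIntegral.integral_nonneg h0
        (fun u hu => bb_nonneg01 hσ hu.1 (le_trans hu.2 h1))
    | succ n ih =>
      intro x h0 h1
      rcases le_or_gt x ((3:ℝ)^n) with h | h
      · exact ih x h0 h
      · rw [BB_shell hσ n h h1]
        have hp : (0:ℝ) < 3^n := by positivity
        have hq : (3:ℝ)^(n+1) = 3*3^n := by rw [pow_succ]; ring
        have w1 : 0 ≤ BB σ (x - 2*3^n) := by
          rcases le_or_gt 0 (x - 2*3^n) with hw | hw
          · exact ih _ hw (by linarith)
          · rw [← BB_even hσ]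
            exact ih _ (by linarith) (by linarith)
        have w2 : (0:ℝ) ≤ ∫ t in ((3:ℝ)^n)..x, zfun t :=
          intervalIntegral.integral_nonneg (le_of_lt h) (fun u _ => zfun_nonneg u)
        have w3 : (0:ℝ) ≤ (∫ t in ((3:ℝ)^n)..x, zfun t) / ((n:ℝ)+1)^2 := by positivity
        linarith
  intro x
  rcases le_or_gt 0 x with h | h
  · obtain ⟨n, _, h2⟩ := cover x
    exact main n x h h2
  · rw [← BB_even hσ]
    obtain ⟨n, h1, _⟩ := cover x
    exact main n (-x) (by linarith) (by linarith)

lemma BB_A (hσ : SigmaSpec σ) (n : ℕ) :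
    (3:ℝ)^n / (2*((n:ℝ)+1)^2) ≤ BB σ ((3:ℝ)^(n+1)) := by
  have hp : (0:ℝ) < 3^n := by positivity
  have h1 : (3:ℝ)^n < (3:ℝ)^(n+1) := by rw [pow_succ]; nlinarith
  rw [BB_shell hσ n h1 (le_refl _)]
  have w1 : 0 ≤ BB σ ((3:ℝ)^(n+1) - 2*3^n) := BB_nonneg hσ _
  obtain ⟨k3, hk3, hk3'⟩ := pow3_int n
  have w2 : ((2*3^n : ℕ):ℝ)/4 ≤ ∫ t in ((3:ℝ)^n)..((3:ℝ)^(n+1)), zfun t := by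
    have := zint_lb k3 (2*3^n) ((3:ℝ)^(n+1)) (by push_cast; rw [hk3', pow_succ]; linarith)
    rw [← hk3] at this
    exact this
  have w2' : (3:ℝ)^n/2 ≤ ∫ t in ((3:ℝ)^n)..((3:ℝ)^(n+1)), zfun t := by
    push_cast at w2; linarith
  have hd : (0:ℝ) < ((n:ℝ)+1)^2 := by positivity
  have w3 : (3:ℝ)^n/2 / ((n:ℝ)+1)^2 ≤ (∫ t in ((3:ℝ)^n)..((3:ℝ)^(n+1)), zfun t) / ((n:ℝ)+1)^2 :=
    (div_le_div_iff_of_pos_right hd).mpr w2'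
  have w4 : (3:ℝ)^n/2/((n:ℝ)+1)^2 = (3:ℝ)^n/(2*((n:ℝ)+1)^2) := div_div _ _ _
  linarith

lemma BB_down (hσ : SigmaSpec σ) (n : ℕ) {x : ℝ} (h1 : (3:ℝ)^n ≤ x) (h2 : x ≤ (3:ℝ)^(n+1)) :
    BB σ ((3:ℝ)^n) - ((n:ℝ)+2)*(x - 3^n) ≤ BB σ x := by
  have hi1 : BB σ x - BB σ ((3:ℝ)^n) = ∫ t in ((3:ℝ)^n)..x, bb σ t := by
    unfold BB
    rw [intervalIntegral.integral_interval_sub_left (bb_ii hσ 0 x) (bb_ii hσ 0 (3^n))]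
  have hb : ∀ t ∈ Set.uIoc ((3:ℝ)^n) x, ‖bb σ t‖ ≤ (n:ℝ)+2 := by
    intro t ht
    rw [Set.uIoc_of_le h1] at ht
    have hq : (3:ℝ)^(n+1) = 3*3^n := by rw [pow_succ]; ring
    have hp : (0:ℝ) < 3^n := by positivity
    have hs := sigma_abs_le hσ (n+1) t (by push_cast at *; nlinarith [ht.1]) (le_trans ht.2 h2)
    push_cast at hs
    rw [Real.norm_eq_abs]
    unfold bb
    rw [abs_mul, abs_of_nonneg (zfun_nonneg t)]
    nlinarith [zfun_nonneg t, zfun_le_one t, abs_nonneg (σ t)]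
  have hnn := intervalIntegral.norm_integral_le_of_norm_le_const hb
  rw [Real.norm_eq_abs, abs_of_nonneg (show (0:ℝ) ≤ x - 3^n by linarith)] at hnn
  have h5 := (abs_le.mp hnn).1
  linarith

lemma BB_low2 (hσ : SigmaSpec σ) (n : ℕ) {x : ℝ} (h1 : (3:ℝ)^n < x) (h2 : x ≤ (3:ℝ)^(n+1)) :
    (x - 3^n - 1)/(4*((n:ℝ)+1)^2) ≤ BB σ x := by
  rw [BB_shell hσ n h1 h2]
  have w1 : 0 ≤ BB σ (x - 2*3^n) := BB_nonneg hσ _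
  obtain ⟨k3, hk3, hk3'⟩ := pow3_int n
  set m : ℕ := ⌊x - 3^n⌋₊ with hm
  have hm1 : (m:ℝ) ≤ x - 3^n := Nat.floor_le (by linarith)
  have hm2 : x - 3^n < m + 1 := Nat.lt_floor_add_one _
  have w2 : (m:ℝ)/4 ≤ ∫ t in ((3:ℝ)^n)..x, zfun t := by
    have := zint_lb k3 m x (by rw [hk3']; linarith)
    rw [← hk3] at this
    exact this
  have hd : (0:ℝ) < ((n:ℝ)+1)^2 := by positivity
  have w3 : (x - 3^n - 1)/4 ≤ ∫ t in ((3:ℝ)^n)..x, zfun t := by linarith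
  have w4 : (x - 3^n - 1)/4/((n:ℝ)+1)^2 ≤ (∫ t in ((3:ℝ)^n)..x, zfun t)/((n:ℝ)+1)^2 :=
    (div_le_div_iff_of_pos_right hd).mpr w3
  have w5 : (x - 3^n - 1)/4/((n:ℝ)+1)^2 = (x - 3^n - 1)/(4*((n:ℝ)+1)^2) := div_div _ _ _
  linarith

lemma pow3_big : ∀ m : ℕ, 35 ≤ m → 64*(m+3)^6 ≤ 3^m := by
  intro m
  induction m with
  | zero => intro h; omega
  | succ m ih =>
    intro hm
    rcases Nat.lt_or_ge m 35 with h | h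
    · have hm35 : m = 34 := by omega
      subst hm35
      norm_num
    · have h1 := ih h
      have h2 : 25*(m+1+3) ≤ 26*(m+3) := by omega
      have h3 : (25*(m+1+3))^6 ≤ (26*(m+3))^6 := Nat.pow_le_pow_left h2 6
      have h4 : (26*(m+3))^6 ≤ 3 * (25*(m+3))^6 := by
        have h26 : (26:ℕ)^6 ≤ 3*25^6 := by norm_num
        calc (26*(m+3))^6 = 26^6 * (m+3)^6 := by rw [Nat.mul_pow]
          _ ≤ (3*25^6) * (m+3)^6 := Nat.mul_le_mul_right _ h26
          _ = 3 * (25*(m+3))^6 := by rw [Nat.mul_pow]; ring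
      have h5 : 25^6 * (64*(m+1+3)^6) ≤ 25^6 * 3^(m+1) := by
        calc 25^6 * (64*(m+1+3)^6) = 64 * (25*(m+1+3))^6 := by rw [Nat.mul_pow]; ring
          _ ≤ 64 * (26*(m+3))^6 := Nat.mul_le_mul_left _ h3
          _ ≤ 64 * (3*(25*(m+3))^6) := Nat.mul_le_mul_left _ h4
          _ = 25^6 * (3 * (64*(m+3)^6)) := by rw [Nat.mul_pow]; ring
          _ ≤ 25^6 * (3 * 3^m) := by
              apply Nat.mul_le_mul_left
              exact Nat.mul_le_mul_left _ h1
          _ = 25^6 * 3^(m+1) := by rw [pow_succ]; ring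
      exact Nat.le_of_mul_le_mul_left h5 (by norm_num)

lemma shell_lb (hσ : SigmaSpec σ) (n : ℕ) {x : ℝ} (h1 : (3:ℝ)^n ≤ x) (h2 : x ≤ (3:ℝ)^(n+1)) :
    2*(n:ℝ) - 71 ≤ BB σ x := by
  rcases Nat.lt_or_ge n 36 with hn | hn
  · have hc : (n:ℝ) ≤ 35 := by exact_mod_cast Nat.lt_succ_iff.mp hn
    have := BB_nonneg hσ x
    linarith
  · obtain ⟨m, rfl⟩ : ∃ m, n = m + 1 := ⟨n-1, by omega⟩
    have hm : 35 ≤ m := by omega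
    have hmr : (35:ℝ) ≤ (m:ℝ) := by exact_mod_cast hm
    have hm0 : (0:ℝ) ≤ (m:ℝ) := by linarith
    set A := BB σ ((3:ℝ)^(m+1)) with hA
    have hA0 : 0 ≤ A := BB_nonneg hσ _
    have hAl : (3:ℝ)^m / (2*((m:ℝ)+1)^2) ≤ A := BB_A hσ m
    have hnum : (64:ℝ)*((m:ℝ)+3)^6 ≤ 3^m := by
      have g := pow3_big m hm
      have g2 : ((64*(m+3)^6 : ℕ):ℝ) ≤ ((3^m : ℕ):ℝ) := by exact_mod_cast g
      push_cast at g2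
      linarith
    have hA2 : 32*((m:ℝ)+3)^4 ≤ A := by
      have d1 : (0:ℝ) < 2*((m:ℝ)+1)^2 := by positivity
      have d2 : 32*((m:ℝ)+3)^4 ≤ 3^m/(2*((m:ℝ)+1)^2) := by
        rw [le_div_iff₀ d1]
        nlinarith [hnum, hm0, sq_nonneg ((m:ℝ)+3), pow_nonneg (by linarith : (0:ℝ) ≤ (m:ℝ)+3) 4]
      linarith
    rcases le_or_gt x ((3:ℝ)^(m+1) + A/(2*((m:ℝ)+3))) with hx | hx
    · have hd := BB_down hσ (m+1) h1 h2
      push_cast at hd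
      have e2 : ((m:ℝ)+1+2)*(x - 3^(m+1)) ≤ ((m:ℝ)+1+2)*(A/(2*((m:ℝ)+3))) := by
        apply mul_le_mul_of_nonneg_left (by linarith) (by linarith)
      have e3 : ((m:ℝ)+1+2)*(A/(2*((m:ℝ)+3))) = A/2 := by
        field_simp
        ring
      have e4 : 2*((m:ℝ)+1) - 71 ≤ A/2 := by nlinarith [hA2, hmr]
      push_cast
      linarith
    · have hx1 : (3:ℝ)^(m+1) < x := by
        have : 0 ≤ A/(2*((m:ℝ)+3)) := by positivity
        linarith
      have hd := BB_low2 hσ (m+1) hx1 h2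
      push_cast at hd
      have d1 : (0:ℝ) < 4*((m:ℝ)+1+1)^2 := by positivity
      have e3 : 16*((m:ℝ)+3)^3 ≤ A/(2*((m:ℝ)+3)) := by
        rw [le_div_iff₀ (by linarith)]
        nlinarith [hA2]
      have e5 : (A/(2*((m:ℝ)+3)) - 1)/(4*((m:ℝ)+1+1)^2) ≤ (x - 3^(m+1) - 1)/(4*((m:ℝ)+1+1)^2) :=
        (div_le_div_iff_of_pos_right d1).mpr (by linarith)
      have e4 : 2*((m:ℝ)+1) - 71 ≤ (16*((m:ℝ)+3)^3 - 1)/(4*((m:ℝ)+1+1)^2) := by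
        rw [le_div_iff₀ d1]
        nlinarith [hm0]
      have e6 : (16*((m:ℝ)+3)^3 - 1)/(4*((m:ℝ)+1+1)^2) ≤ (A/(2*((m:ℝ)+3)) - 1)/(4*((m:ℝ)+1+1)^2) :=
        (div_le_div_iff_of_pos_right d1).mpr (by linarith)
      push_cast
      linarith

lemma BB_hasDeriv (hσ : SigmaSpec σ) (x : ℝ) : HasDerivAt (BB σ) (bb σ x) x :=
  intervalIntegral.integral_hasDerivAt_right (bb_ii hσ 0 x)
    ((bb_cont hσ).stronglyMeasurableAtFilter _ _)
    (bb_cont hσ).continuousAt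

lemma BB_cont (hσ : SigmaSpec σ) : Continuous (BB σ) := by
  rw [continuous_iff_continuousAt]
  exact fun x => (BB_hasDeriv hσ x).continuousAt

def ff (σ : ℝ → ℝ) (y : ℝ) : ℝ := Real.exp (-BB σ y)

def uu (σ : ℝ → ℝ) (x : ℝ) : ℝ := ∫ y in (0:ℝ)..x, ff σ y

lemma ff_cont (hσ : SigmaSpec σ) : Continuous (ff σ) :=
  Real.continuous_exp.comp (BB_cont hσ).neg

lemma ff_pos (y : ℝ) : 0 < ff σ y := Real.exp_pos _

lemma ff_le_one (hσ : SigmaSpec σ) (y : ℝ) : ff σ y ≤ 1 := by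
  unfold ff
  rw [show (1:ℝ) = Real.exp 0 by rw [Real.exp_zero]]
  exact Real.exp_le_exp.mpr (by linarith [BB_nonneg hσ y])

lemma ff_ii (hσ : SigmaSpec σ) (a b : ℝ) : IntervalIntegrable (ff σ) MeasureTheory.volume a b :=
  (ff_cont hσ).intervalIntegrable a b

lemma uu_hasDeriv (hσ : SigmaSpec σ) (x : ℝ) : HasDerivAt (uu σ) (ff σ x) x :=
  intervalIntegral.integral_hasDerivAt_right (ff_ii hσ 0 x)
    ((ff_cont hσ).stronglyMeasurableAtFilter _ _)
    (ff_cont hσ).continuousAt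

lemma uu_deriv (hσ : SigmaSpec σ) : deriv (uu σ) = ff σ :=
  funext fun x => (uu_hasDeriv hσ x).deriv

lemma uu_mono (hσ : SigmaSpec σ) : StrictMono (uu σ) := by
  apply strictMono_of_deriv_pos
  intro x
  rw [uu_deriv hσ]
  exact ff_pos x

lemma uu_odd (hσ : SigmaSpec σ) (x : ℝ) : uu σ (-x) = -uu σ x := by
  have hfe : ∀ y : ℝ, ff σ (-y) = ff σ y := fun y => by unfold ff; rw [BB_even hσ]
  have h1 : ∫ t in (0:ℝ)..x, ff σ (-t) = ∫ t in (-x)..(-(0:ℝ)), ff σ t :=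
    intervalIntegral.integral_comp_neg (fun t => ff σ t)
  have h2 : ∫ t in (0:ℝ)..x, ff σ (-t) = ∫ t in (0:ℝ)..x, ff σ t := by
    apply intervalIntegral.integral_congr
    intro t _
    exact hfe t
  have h3 : ∫ t in (-x)..(-(0:ℝ)), ff σ t = -uu σ (-x) := by
    rw [neg_zero, intervalIntegral.integral_symm]
    rfl
  have h4 : uu σ x = ∫ t in (0:ℝ)..x, ff σ t := rfl
  linarith [h1, h2, h3]

lemma exp_ratio : (3:ℝ) * Real.exp (-2) ≤ 1/2 := by
  have h1 : (2.7:ℝ) < Real.exp 1 := lt_trans (by norm_num) Real.exp_one_gt_d9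
  have h2 : Real.exp 2 = Real.exp 1 * Real.exp 1 := by
    rw [← Real.exp_add]; norm_num
  have h3 : (6:ℝ) ≤ Real.exp 2 := by nlinarith
  have h4 : Real.exp (-2) = (Real.exp 2)⁻¹ := by
    rw [← Real.exp_neg]
  rw [h4]
  rw [mul_inv_le_iff₀ (by positivity)]
  linarith

lemma shell_int (hσ : SigmaSpec σ) (n : ℕ) :
    ∫ y in ((3:ℝ)^n)..((3:ℝ)^(n+1)), ff σ y ≤ 2*Real.exp 71 * (1/2)^n := by
  have hq : (3:ℝ)^(n+1) = 3*3^n := by rw [pow_succ]; ring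
  have hp : (0:ℝ) < 3^n := by positivity
  have h1 : ∫ y in ((3:ℝ)^n)..((3:ℝ)^(n+1)), ff σ y
      ≤ ∫ y in ((3:ℝ)^n)..((3:ℝ)^(n+1)), Real.exp (71 - 2*(n:ℝ)) := by
    apply intervalIntegral.integral_mono_on (by nlinarith) (ff_ii hσ _ _) intervalIntegrable_const
    intro y hy
    unfold ff
    apply Real.exp_le_exp.mpr
    have := shell_lb hσ n hy.1 hy.2
    linarith
  rw [intervalIntegral.integral_const, smul_eq_mul] at h1
  have h2 : ((3:ℝ)^(n+1) - 3^n) * Real.exp (71 - 2*(n:ℝ)) = 2*3^n * Real.exp (71 - 2*(n:ℝ)) := by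
    rw [hq]; ring
  rw [h2] at h1
  have h3 : Real.exp (71 - 2*(n:ℝ)) = Real.exp 71 * (Real.exp (-2))^n := by
    rw [← Real.exp_nat_mul, ← Real.exp_add]
    norm_num
    ring_nf
  have h4 : (2:ℝ)*3^n * (Real.exp 71 * (Real.exp (-2))^n)
      = 2*Real.exp 71 * ((3*Real.exp (-2))^n) := by
    rw [mul_pow]; ring
  have h5 : ((3:ℝ)*Real.exp (-2))^n ≤ (1/2)^n := by
    apply pow_le_pow_left₀ (by positivity) exp_ratio
  have h6 : (0:ℝ) < 2*Real.exp 71 := by positivity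
  calc ∫ y in ((3:ℝ)^n)..((3:ℝ)^(n+1)), ff σ y ≤ 2*3^n * Real.exp (71 - 2*(n:ℝ)) := h1
    _ = 2*Real.exp 71 * ((3*Real.exp (-2))^n) := by rw [h3, h4]
    _ ≤ 2*Real.exp 71 * (1/2)^n := by nlinarith

lemma uu_growth (hσ : SigmaSpec σ) : ∀ N : ℕ, uu σ ((3:ℝ)^N) ≤ 1 + 4*Real.exp 71*(1 - (1/2)^N) := by
  intro N
  induction N with
  | zero =>
    have h1 : uu σ ((3:ℝ)^0) ≤ 1 := by
      have h2 : ∫ y in (0:ℝ)..1, ff σ y ≤ ∫ y in (0:ℝ)..1, (1:ℝ) := by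
        apply intervalIntegral.integral_mono_on (by norm_num) (ff_ii hσ _ _) intervalIntegrable_const
        intro y _
        exact ff_le_one hσ y
      rw [intervalIntegral.integral_const, smul_eq_mul] at h2
      norm_num at h2 ⊢
      exact h2
    simp only [pow_zero] at h1 ⊢
    norm_num
    linarith
  | succ N ih =>
    have hsplit : uu σ ((3:ℝ)^(N+1)) = uu σ ((3:ℝ)^N) + ∫ y in ((3:ℝ)^N)..((3:ℝ)^(N+1)), ff σ y := by
      unfold uu
      rw [intervalIntegral.integral_add_adjacent_intervals (ff_ii hσ _ _) (ff_ii hσ _ _)]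
    have h1 := shell_int hσ N
    have h2 : (2:ℝ)*Real.exp 71 * (1/2)^N = 4*Real.exp 71*((1/2)^N - (1/2)^(N+1)) := by
      rw [pow_succ]; ring
    rw [hsplit]
    rw [h2] at h1
    linarith

lemma uu_nonneg (hσ : SigmaSpec σ) {x : ℝ} (hx : 0 ≤ x) : 0 ≤ uu σ x :=
  intervalIntegral.integral_nonneg hx (fun u _ => le_of_lt (ff_pos u))

lemma uu_bound (hσ : SigmaSpec σ) (x : ℝ) : |uu σ x| ≤ 1 + 4*Real.exp 71 := by
  have key : ∀ y : ℝ, 0 ≤ y → uu σ y ≤ 1 + 4*Real.exp 71 := by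
    intro y hy
    obtain ⟨N, hN⟩ := pow_unbounded_of_one_lt y (by norm_num : (1:ℝ) < 3)
    have h1 : uu σ y ≤ uu σ ((3:ℝ)^N) := (uu_mono hσ).monotone (le_of_lt hN)
    have h2 := uu_growth hσ N
    have h3 : (0:ℝ) ≤ 4*Real.exp 71 * (1/2)^N := by positivity
    have h4 : 4*Real.exp 71*(1 - (1/2)^N) = 4*Real.exp 71 - 4*Real.exp 71*(1/2)^N := by ring
    linarith
  rcases le_or_gt 0 x with h | h
  · rw [abs_of_nonneg (uu_nonneg hσ h)]
    exact key x h
  · rw [abs_of_nonpos]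
    · rw [← uu_odd hσ x]
      exact key (-x) (by linarith)
    · have := uu_odd hσ (-x)
      have h5 := uu_nonneg hσ (show (0:ℝ) ≤ -x by linarith)
      simp only [neg_neg] at this
      linarith

lemma ff_hasDeriv (hσ : SigmaSpec σ) (x : ℝ) :
    HasDerivAt (ff σ) (-bb σ x * ff σ x) x := by
  have h := ((BB_hasDeriv hσ x).neg).exp
  convert h using 1
  · rfl
  · simp only [ff, Pi.neg_apply]; ring

lemma uu_contDiff (hσ : SigmaSpec σ) : ContDiff ℝ 2 (uu σ) := by
  rw [show (2 : WithTop ℕ∞) = 1 + 1 from rfl, contDiff_succ_iff_deriv]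
  refine ⟨fun x => (uu_hasDeriv hσ x).differentiableAt, by simp, ?_⟩
  rw [uu_deriv hσ, contDiff_one_iff_deriv]
  refine ⟨fun x => (ff_hasDeriv hσ x).differentiableAt, ?_⟩
  have h : deriv (ff σ) = fun x => -bb σ x * ff σ x := funext fun x => (ff_hasDeriv hσ x).deriv
  rw [h]
  exact (bb_cont hσ).neg.mul (ff_cont hσ)

lemma uu_ode (hσ : SigmaSpec σ) (x : ℝ) :
    deriv (deriv (uu σ)) x + bb σ x * deriv (uu σ) x = 0 := by
  rw [uu_deriv hσ, (ff_hasDeriv hσ x).deriv]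
  ring

lemma uu_not_ap (hσ : SigmaSpec σ) : ¬ AlmostPeriodic1 (uu σ) := by
  intro hap
  obtain ⟨-, hB⟩ := hap
  obtain ⟨k, hk, ψ, hT⟩ := hB (fun n => (n:ℝ))
  have h0 : uu σ 0 = 0 := intervalIntegral.integral_same
  have h1 : 0 < uu σ 1 := by
    have := uu_mono hσ (show (0:ℝ) < 1 by norm_num)
    linarith
  rw [Metric.tendstoUniformly_iff] at hT
  have hev := hT (uu σ 1 / 2) (by linarith)
  rw [Filter.eventually_atTop] at hev
  obtain ⟨N, hN⟩ := hev
  have e1 := hN N (le_refl N) (-(k N : ℝ))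
  have e2 := hN (N+1) (Nat.le_succ N) (-(k N : ℝ))
  simp only [Real.dist_eq] at e1 e2
  have hx1 : (-(k N : ℝ) + (k N : ℝ)) = 0 := by ring
  rw [hx1, h0] at e1
  have hkk : k N < k (N+1) := hk (Nat.lt_succ_self N)
  have hd : (1:ℝ) ≤ -(k N : ℝ) + (k (N+1) : ℝ) := by
    have : (k N : ℝ) + 1 ≤ (k (N+1) : ℝ) := by exact_mod_cast hkk
    linarith
  have hm : uu σ 1 ≤ uu σ (-(k N : ℝ) + (k (N+1) : ℝ)) := (uu_mono hσ).monotone hd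
  have t1 := abs_lt.mp e1
  have t2 := abs_lt.mp e2
  linarith [t1.1, t1.2, t2.1, t2.2]

lemma solution_rep (hσ : SigmaSpec σ) (u : ℝ → ℝ) (hu : ContDiff ℝ 2 u)
    (hode : ∀ x, deriv (deriv u) x + bb σ x * deriv u x = 0) :
    ∀ x, u x = u 0 + deriv u 0 * uu σ x := by
  have hd1 : Differentiable ℝ u := hu.differentiable (by norm_num)
  have hd2 : Differentiable ℝ (deriv u) := by
    rw [show (2 : WithTop ℕ∞) = 1 + 1 from rfl, contDiff_succ_iff_deriv] at hu
    exact hu.2.2.differentiable (by norm_num)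
  set w := fun x => deriv u x * Real.exp (BB σ x) with hw
  have hwd : ∀ x, HasDerivAt w 0 x := by
    intro x
    have h1 : HasDerivAt (deriv u) (deriv (deriv u) x) x := (hd2 x).hasDerivAt
    have h2 : HasDerivAt (fun y => Real.exp (BB σ y)) (Real.exp (BB σ x) * bb σ x) x :=
      (BB_hasDeriv hσ x).exp
    have h3 := h1.mul h2
    refine h3.congr_deriv ?_
    have h4 : deriv (deriv u) x = -(bb σ x * deriv u x) := by linarith [hode x]
    rw [h4]
    ring
  have hconst : ∀ x, w x = w 0 := fun x =>
    is_const_of_deriv_eq_zero (fun y => (hwd y).differentiableAt)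
      (fun y => (hwd y).deriv) x 0
  have hBB0 : BB σ 0 = 0 := intervalIntegral.integral_same
  have hw0 : w 0 = deriv u 0 := by rw [hw]; simp [hBB0]
  have hder : ∀ x, deriv u x = deriv u 0 * ff σ x := by
    intro x
    have h5 := hconst x
    rw [hw0] at h5
    have hep : (0:ℝ) < Real.exp (BB σ x) := Real.exp_pos _
    have h6 : deriv u x = deriv u 0 / Real.exp (BB σ x) := by
      rw [eq_div_iff (ne_of_gt hep)]
      exact h5
    rw [h6]
    unfold ff
    rw [Real.exp_neg, div_eq_mul_inv]
  intro x
  set g := fun x => u x - deriv u 0 * uu σ x with hg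
  have hgd : ∀ y, HasDerivAt g 0 y := by
    intro y
    have h7 := ((hd1 y).hasDerivAt).sub ((uu_hasDeriv hσ y).const_mul (deriv u 0))
    refine h7.congr_deriv ?_
    rw [hder y]
    ring
  have hgconst : g x = g 0 :=
    is_const_of_deriv_eq_zero (fun y => (hgd y).differentiableAt)
      (fun y => (hgd y).deriv) x 0
  have huu0 : uu σ 0 = 0 := intervalIntegral.integral_same
  rw [hg] at hgconst
  simp only [huu0, mul_zero, sub_zero] at hgconst
  linarith

end Cx

/-- **Proposition 3.5.**  With `b = σ·z`, all solutions of `u'' + b u' = 0` on `ℝ`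
are bounded and the solution space is generated by `u₁ ≡ 1` and
`u₂(x) = ∫₀^x exp(−∫₀^y b(t) dt) dy`, which is bounded, strictly increasing, odd
and not almost periodic. -/
theorem counterexample_solutions (σ : ℝ → ℝ) (hσ : SigmaSpec σ) :
    ∀ b u₂ : ℝ → ℝ, b = (fun x => σ x * zfun x) →
    u₂ = (fun x => ∫ y in (0 : ℝ)..x, Real.exp (-∫ t in (0 : ℝ)..y, b t)) →
      ContDiff ℝ 2 u₂ ∧
      (∀ x : ℝ, deriv (deriv u₂) x + b x * deriv u₂ x = 0) ∧
      (∃ M : ℝ, ∀ x, |u₂ x| ≤ M) ∧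
      StrictMono u₂ ∧
      (∀ x : ℝ, u₂ (-x) = -u₂ x) ∧
      ¬ AlmostPeriodic1 u₂ ∧
      (∀ u : ℝ → ℝ, ContDiff ℝ 2 u →
        (∀ x : ℝ, deriv (deriv u) x + b x * deriv u x = 0) →
        (∃ M : ℝ, ∀ x, |u x| ≤ M) ∧ ∃ α β : ℝ, ∀ x, u x = α + β * u₂ x) := by
  intro b u₂ hb hu
  have hb2 : b = Cx.bb σ := hb
  have hu2 : u₂ = Cx.uu σ := by rw [hu, hb2]; rfl
  rw [hb2, hu2]
  refine ⟨Cx.uu_contDiff hσ, Cx.uu_ode hσ, ⟨1 + 4*Real.exp 71, Cx.uu_bound hσ⟩,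
    Cx.uu_mono hσ, Cx.uu_odd hσ, Cx.uu_not_ap hσ, ?_⟩
  intro u hcd hode
  have rep := Cx.solution_rep hσ u hcd hode
  constructor
  · refine ⟨|u 0| + |deriv u 0| * (1 + 4*Real.exp 71), fun x => ?_⟩
    rw [rep x]
    calc |u 0 + deriv u 0 * Cx.uu σ x| ≤ |u 0| + |deriv u 0 * Cx.uu σ x| := abs_add_le _ _
      _ = |u 0| + |deriv u 0| * |Cx.uu σ x| := by rw [abs_mul]
      _ ≤ |u 0| + |deriv u 0| * (1 + 4*Real.exp 71) := by
          have := Cx.uu_bound hσ x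
          nlinarith [abs_nonneg (deriv u 0)]
  · exact ⟨u 0, deriv u 0, rep⟩
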